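/- arXiv:1610.06423 — 7 statements merged into one kernel-verified Lean document; each statement's English description precedes it below -/
import Mathlib

section
/- For every real x with 0 ≤ x < 1/2 and every positive integer r, the identity ∑_{k=r}^∞ ((-1)^k * binomial(k,r) / k^2) * (x/(1-x))^k = ((-1)^r / r) * ∑_{k=r}^∞ x^k / k holds. -/
/-!
Put `y = x / (1 - x)` and `r = s + 1`. Expanding
`y ^ (k + r) = ∑ j, C(j + k + s, k + s) x ^ (k + r + j)` turns the left side into a double series
which converges absolutely because `y < 1`, so it may be resummed along the antidiagonals
`k + j = n`. By the absorption identities `C(k + r, r) / (k + r) = C(k + s, s) / r` and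
`C(n + s, k + s) / (k + r) = C(n + r, k + r) / (n + r)`, the coefficient of `x ^ (n + r)` is
`(-1) ^ r / (r (n + r))` times the alternating sum `∑ k, (-1) ^ k C(k + s, s) C(n + r, k + r)`,
which equals `1` by Pascal's rule and induction on `n`.
-/

open Finset

theorem Int.alternating_sum_range_add_choose_mul_choose (s : ℕ) : ∀ n : ℕ,
    ∑ k ∈ Finset.range (n + 1),
      (-1 : ℤ) ^ k * (k + s).choose s * (n + s + 1).choose (k + s + 1) = 1
  | 0 => by simp
  | n + 1 => by
    have pascal (k : ℕ) : ((n + 1 + s + 1).choose (k + s + 1) : ℤ)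
        = (n + s + 1).choose (k + s + 1) + (n + s + 1).choose (k + s) := by
      rw [show n + 1 + s + 1 = n + s + 1 + 1 by omega, Nat.choose_succ_succ', Nat.cast_add,
        add_comm]
    have trinomial_revision (k : ℕ) (hk : k ∈ Finset.range (n + 2)) :
        (-1 : ℤ) ^ k * (k + s).choose s * (n + s + 1).choose (k + s)
          = (n + s + 1).choose s * ((-1) ^ k * (n + 1).choose k) := by
      have h := Nat.choose_mul (n := n + s + 1) (k := k + s) (s := s)
        (by have := mem_range.1 hk; omega)
      rw [show n + s + 1 - s = n + 1 by omega, Nat.add_sub_cancel] at h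
      have h' : ((n + s + 1).choose (k + s) * (k + s).choose s : ℤ)
          = (n + s + 1).choose s * (n + 1).choose k := by exact_mod_cast h
      linear_combination (-1 : ℤ) ^ k * h'
    simp_rw [pascal, mul_add, sum_add_distrib, sum_congr rfl trinomial_revision, ← mul_sum,
      Int.alternating_sum_range_choose_of_ne (Nat.succ_ne_zero n), sum_range_succ _ (n + 1),
      Int.alternating_sum_range_add_choose_mul_choose s n,
      Nat.choose_eq_zero_of_lt (by omega : n + s + 1 < n + 1 + s + 1)]
    simp

theorem HasSum.sum_antidiagonal {α A : Type*} [AddCommMonoid α] [TopologicalSpace α]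
    [ContinuousAdd α] [T3Space α] [AddCommMonoid A] [HasAntidiagonal A]
    {F : A × A → α} {a : α} (h : HasSum F a) :
    HasSum (fun n ↦ ∑ p ∈ antidiagonal n, F p) a := by
  refine (HasAntidiagonal.sigmaAntidiagonalEquivProd.hasSum_iff.2 h).sigma fun n ↦ ?_
  rw [← sum_finset_coe]
  exact hasSum_fintype _

theorem sum_range_choose_div_sq_mul_choose {K : Type*} [Field K] [CharZero K] (s n : ℕ) :
    ∑ k ∈ range (n + 1), (-1 : K) ^ (k + (s + 1)) * (k + (s + 1)).choose (s + 1)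
        / ((k : K) + ((s + 1 : ℕ) : K)) ^ 2 * (n + s).choose (k + s)
      = (-1) ^ (s + 1) / (((s + 1 : ℕ) : K) * ((n : K) + ((s + 1 : ℕ) : K))) := by
  have term (k : ℕ) : (-1 : K) ^ (k + (s + 1)) * (k + (s + 1)).choose (s + 1)
        / ((k : K) + ((s + 1 : ℕ) : K)) ^ 2 * (n + s).choose (k + s)
      = (-1) ^ (s + 1) / (((s + 1 : ℕ) : K) * ((n : K) + ((s + 1 : ℕ) : K)))
          * ((-1) ^ k * (k + s).choose s * (n + s + 1).choose (k + s + 1)) := by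
    have absorb_k : ((k + s + 1).choose (s + 1) * (s + 1) : K)
        = (k + s + 1) * (k + s).choose s := by
      exact_mod_cast (Nat.add_one_mul_choose_eq (k + s) s).symm
    have absorb_n : ((n + s + 1) * (n + s).choose (k + s) : K)
        = (n + s + 1).choose (k + s + 1) * (k + s + 1) := by
      exact_mod_cast Nat.add_one_mul_choose_eq (n + s) (k + s)
    have hk : (k + s + 1 : K) ≠ 0 := by exact_mod_cast Nat.succ_ne_zero (k + s)
    have hn : (n + s + 1 : K) ≠ 0 := by exact_mod_cast Nat.succ_ne_zero (n + s)
    have hs : (s + 1 : K) ≠ 0 := by exact_mod_cast Nat.succ_ne_zero s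
    rw [← add_assoc]
    push_cast
    rw [← add_assoc, ← add_assoc]
    field_simp
    linear_combination (-1 : K) ^ (k + s + 1) * ((n + s + 1) * (n + s).choose (k + s) * absorb_k
      + (k + s + 1) * (k + s).choose s * absorb_n)
  rw [sum_congr rfl fun k _ ↦ term k, ← mul_sum]
  have h : ∑ k ∈ range (n + 1), (-1 : K) ^ k * (k + s).choose s * (n + s + 1).choose (k + s + 1)
      = 1 := by exact_mod_cast Int.alternating_sum_range_add_choose_mul_choose s n
  rw [h, mul_one]

section EulerTransform

variable {𝕜 : Type*} [NormedField 𝕜] {x : 𝕜}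

theorem hasSum_div_one_sub_pow_succ (hx : ‖x‖ < 1) (m : ℕ) :
    HasSum (fun j : ℕ ↦ (j + m).choose m * x ^ (m + 1 + j)) ((x / (1 - x)) ^ (m + 1)) := by
  have hterm : (fun j : ℕ ↦ (j + m).choose m * x ^ (m + 1 + j))
      = fun j ↦ x ^ (m + 1) * ((j + m).choose m * x ^ j) := by
    ext j
    ring
  rw [hterm, div_pow, div_eq_mul_one_div]
  exact (hasSum_choose_mul_geometric_of_norm_lt_one m hx).mul_left _

theorem tsum_mul_div_one_sub_pow_eq_tsum [CompleteSpace 𝕜] (hx : ‖x‖ < 1) (s : ℕ)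
    {a : ℕ → 𝕜} (ha : Summable fun k ↦ ‖a k‖ * (‖x‖ / (1 - ‖x‖)) ^ k) :
    ∑' k, a k * (x / (1 - x)) ^ (k + (s + 1))
      = ∑' n, (∑ k ∈ range (n + 1), a k * (n + s).choose (k + s)) * x ^ (n + (s + 1)) := by
  set F : ℕ × ℕ → 𝕜 :=
    fun p ↦ a p.1 * ((p.2 + (p.1 + s)).choose (p.1 + s) * x ^ (p.1 + s + 1 + p.2))
  set G : ℕ × ℕ → ℝ :=
    fun p ↦ ‖a p.1‖ * ((p.2 + (p.1 + s)).choose (p.1 + s) * ‖x‖ ^ (p.1 + s + 1 + p.2))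
  have hrow (k : ℕ) : HasSum (fun j ↦ F (k, j)) (a k * (x / (1 - x)) ^ (k + (s + 1))) :=
    (hasSum_div_one_sub_pow_succ hx (k + s)).mul_left (a k)
  have hrow_norm (k : ℕ) :
      HasSum (fun j ↦ G (k, j)) (‖a k‖ * (‖x‖ / (1 - ‖x‖)) ^ (k + s + 1)) :=
    (hasSum_div_one_sub_pow_succ (by rwa [norm_norm]) (k + s)).mul_left ‖a k‖
  have hG : Summable G := by
    refine (summable_prod_of_nonneg fun p ↦ by positivity).2
      ⟨fun k ↦ (hrow_norm k).summable, ?_⟩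
    simp_rw [(hrow_norm _).tsum_eq, pow_succ, pow_add, ← mul_assoc]
    exact (ha.mul_right _).mul_right _
  have hF : Summable F := hG.of_norm_bounded fun p ↦ by
    simp only [F, G, norm_mul, norm_pow]
    gcongr
    simpa using Nat.norm_cast_le (α := 𝕜) _
  calc ∑' k, a k * (x / (1 - x)) ^ (k + (s + 1))
      = ∑' p, F p := (hF.hasSum.prod_fiberwise hrow).tsum_eq
    _ = ∑' n, ∑ p ∈ antidiagonal n, F p := hF.hasSum.sum_antidiagonal.tsum_eq.symm
    _ = _ := tsum_congr fun n ↦ by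
      rw [Nat.sum_antidiagonal_eq_sum_range_succ_mk, sum_mul]
      refine sum_congr rfl fun k hk ↦ ?_
      have hkn : k ≤ n := Nat.lt_succ_iff.1 (mem_range.1 hk)
      simp only [F, show n - k + (k + s) = n + s by omega,
        show k + s + 1 + (n - k) = n + (s + 1) by omega]
      ring

end EulerTransform

theorem renyi_series_identity (x : ℝ) (hx0 : 0 ≤ x) (hx : x < 1/2) (r : ℕ) (hr : 0 < r) :
    ∑' k : ℕ, ((-1 : ℝ) ^ (k + r) * ((k + r).choose r) / ((k + r) : ℝ) ^ 2)
        * (x / (1 - x)) ^ (k + r)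
      = ((-1 : ℝ) ^ r / r) * ∑' k : ℕ, x ^ (k + r) / ((k + r) : ℝ) := by
  obtain ⟨s, rfl⟩ : ∃ s, r = s + 1 := ⟨r - 1, by omega⟩
  have hx1 : ‖x‖ < 1 := by rw [Real.norm_of_nonneg hx0]; linarith
  have hy0 : 0 ≤ x / (1 - x) := div_nonneg hx0 (by linarith)
  have hy1 : ‖x / (1 - x)‖ < 1 := by
    rw [Real.norm_of_nonneg hy0, div_lt_one (by linarith)]
    linarith
  have hcoeff (k : ℕ) : ‖(-1 : ℝ) ^ (k + (s + 1)) * (k + (s + 1)).choose (s + 1)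
      / ((k : ℝ) + ((s + 1 : ℕ) : ℝ)) ^ 2‖ ≤ (k + (s + 1)).choose (s + 1) := by
    rw [norm_div, norm_mul, norm_pow, norm_pow, norm_neg, norm_one, one_pow, one_mul,
      Real.norm_natCast, Real.norm_of_nonneg (by positivity)]
    exact div_le_self (Nat.cast_nonneg _) (one_le_pow₀ (by norm_cast; omega))
  have hsum : Summable fun k : ℕ ↦ ‖(-1 : ℝ) ^ (k + (s + 1)) * (k + (s + 1)).choose (s + 1)
      / ((k : ℝ) + ((s + 1 : ℕ) : ℝ)) ^ 2‖ * (‖x‖ / (1 - ‖x‖)) ^ k := by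
    rw [Real.norm_of_nonneg hx0]
    exact Summable.of_nonneg_of_le (fun k ↦ by positivity)
      (fun k ↦ mul_le_mul_of_nonneg_right (hcoeff k) (by positivity))
      (summable_choose_mul_geometric_of_norm_lt_one (s + 1) hy1)
  rw [tsum_mul_div_one_sub_pow_eq_tsum hx1 s hsum, ← tsum_mul_left]
  refine tsum_congr fun n ↦ ?_
  rw [sum_range_choose_div_sq_mul_choose, div_mul_div_comm, div_mul_eq_mul_div]
end

section
/- For every positive integer m, the tail double sum ∑_{r=m}^∞ (1/r) ∑_{j=r}^∞ 1/(j·3^j) is strictly less than 9/(4·m²·3^m). -/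
/-! Bounding `1 / (j + x)` by `1 / x` dominates the inner sum by a geometric series, giving
`∑' j, 1 / ((j + x) * b ^ (j + n)) < (1 - b⁻¹)⁻¹ / (x * b ^ n)`; then `1 / (r + x) ^ 2 ≤ 1 / x ^ 2`
dominates the outer sum by a geometric series once more. For `b = 3`, `(1 - b⁻¹)⁻¹ ^ 2 = 9 / 4`. -/

lemma tsum_lt_mul_geometric {f : ℕ → ℝ} {c q : ℝ} (hq₀ : 0 ≤ q) (hq₁ : q < 1)
    (hf : ∀ n, 0 ≤ f n) (hle : ∀ n, f n ≤ c * q ^ n) {i : ℕ} (hi : f i < c * q ^ i) :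
    ∑' n, f n < c * (1 - q)⁻¹ := by
  have hgeom : Summable (fun n => c * q ^ n) :=
    (summable_geometric_of_lt_one hq₀ hq₁).mul_left c
  calc ∑' n, f n < ∑' n, c * q ^ n :=
        Summable.tsum_lt_tsum hle hi (hgeom.of_nonneg_of_le hf hle) hgeom
    _ = c * (1 - q)⁻¹ := by rw [tsum_mul_left, tsum_geometric_of_lt_one hq₀ hq₁]

lemma one_div_mul_pow_eq (b x : ℝ) (j n : ℕ) :
    1 / (x * b ^ n) * b⁻¹ ^ j = 1 / (x * b ^ (j + n)) := by
  rw [pow_add, inv_pow]; ring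

section
variable {b x : ℝ}

lemma one_div_add_mul_pow_le (hb : 0 < b) (hx : 0 < x) (j n : ℕ) :
    1 / ((j + x) * b ^ (j + n)) ≤ 1 / (x * b ^ n) * b⁻¹ ^ j := by
  rw [one_div_mul_pow_eq]
  gcongr
  exact le_add_of_nonneg_left j.cast_nonneg

lemma one_div_add_mul_pow_lt (hb : 0 < b) (hx : 0 < x) {j : ℕ} (hj : 0 < j) (n : ℕ) :
    1 / ((j + x) * b ^ (j + n)) < 1 / (x * b ^ n) * b⁻¹ ^ j := by
  rw [one_div_mul_pow_eq]
  gcongr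
  exact lt_add_of_pos_left x (Nat.cast_pos.mpr hj)

lemma tsum_one_div_add_mul_pow_lt (hb : 1 < b) (hx : 0 < x) (n : ℕ) :
    ∑' j : ℕ, 1 / ((j + x) * b ^ (j + n)) < (1 - b⁻¹)⁻¹ / (x * b ^ n) := by
  have hb₀ : 0 < b := one_pos.trans hb
  rw [div_eq_mul_one_div, mul_comm]
  exact tsum_lt_mul_geometric (inv_nonneg.mpr hb₀.le) (inv_lt_one_of_one_lt₀ hb)
    (fun j => by positivity) (fun j => one_div_add_mul_pow_le hb₀ hx j n)
    (one_div_add_mul_pow_lt hb₀ hx one_pos n)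

lemma tsum_one_div_add_mul_tsum_lt (hb : 1 < b) (hx : 0 < x) (n : ℕ) :
    ∑' r : ℕ, 1 / (r + x) * ∑' j : ℕ, 1 / ((j + (r + x)) * b ^ (j + (r + n)))
      < (1 - b⁻¹)⁻¹ ^ 2 / (x ^ 2 * b ^ n) := by
  have hb₀ : 0 < b := one_pos.trans hb
  set C := (1 - b⁻¹)⁻¹
  have hC : 0 < C := inv_pos.mpr (sub_pos.mpr (inv_lt_one_of_one_lt₀ hb))
  have hterm : ∀ r : ℕ, 1 / (r + x) * ∑' j : ℕ, 1 / ((j + (r + x)) * b ^ (j + (r + n)))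
      < C / (x ^ 2 * b ^ n) * b⁻¹ ^ r := by
    intro r
    have hrx : 0 < r + x := by positivity
    calc 1 / (r + x) * ∑' j : ℕ, 1 / ((j + (r + x)) * b ^ (j + (r + n)))
        < 1 / (r + x) * (C / ((r + x) * b ^ (r + n))) := by
          gcongr; exact tsum_one_div_add_mul_pow_lt hb hrx (r + n)
      _ = C * (1 / ((r + x) ^ 2 * b ^ n) * b⁻¹ ^ r) := by
          rw [one_div_mul_pow_eq]; field_simp
      _ ≤ C * (1 / (x ^ 2 * b ^ n) * b⁻¹ ^ r) := by
          gcongr; exact le_add_of_nonneg_left r.cast_nonneg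
      _ = C / (x ^ 2 * b ^ n) * b⁻¹ ^ r := by ring
  calc _ < C / (x ^ 2 * b ^ n) * C :=
        tsum_lt_mul_geometric (inv_nonneg.mpr hb₀.le) (inv_lt_one_of_one_lt₀ hb)
          (fun r => mul_nonneg (by positivity) (tsum_nonneg fun j => by positivity))
          (fun r => (hterm r).le) (hterm 0)
    _ = C ^ 2 / (x ^ 2 * b ^ n) := by ring

end

theorem renyi_double_sum_tail_bound (m : ℕ) (hm : 0 < m) :
    ∑' r : ℕ, (1 / ((r : ℝ) + m)) *
      ∑' j : ℕ, 1 / (((j : ℝ) + r + m) * 3 ^ (j + r + m))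
      < 9 / (4 * (m : ℝ) ^ 2 * 3 ^ m) := by
  have h := tsum_one_div_add_mul_tsum_lt (b := 3) (by norm_num) (Nat.cast_pos.mpr hm) m
  simp only [add_assoc]
  convert h using 1
  field_simp
  norm_num
end

section
/- Let (f_n) be a sequence of continuously differentiable real functions on the interval (0, L] converging pointwise to a continuously differentiable function f, and suppose |x·f_n'(x)| ≤ M for all n and all x ∈ (0, L]. Then |x·f'(x)| ≤ M for all x ∈ (0, L]. -/
open Set Filter Topology

/-!
Where `|w f'(w)| ≤ M`, the mean value theorem on `[y, x]` gives
`|f(x) - f(y)| ≤ (M / y) (x - y)`. This bound involves only values of the functions, so it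
survives the pointwise limit `f_n → g`; dividing by `x - y` and letting `y → x⁻` bounds
`|g'(x)|` by `M / x`.
-/

theorem abs_sub_le_of_abs_mul_deriv_le {f f' : ℝ → ℝ} {x y M : ℝ} (hy : 0 < y) (hyx : y ≤ x)
    (hf : ∀ w ∈ Icc y x, HasDerivWithinAt f (f' w) (Icc y x) w)
    (hbnd : ∀ w ∈ Icc y x, |w * f' w| ≤ M) :
    |f x - f y| ≤ M / y * (x - y) := by
  have hderiv : ∀ w ∈ Icc y x, ‖f' w‖ ≤ M / y := by
    intro w hw
    rw [Real.norm_eq_abs, le_div_iff₀ hy]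
    calc |f' w| * y ≤ |f' w| * w := by gcongr; exact hw.1
      _ = |w * f' w| := by rw [abs_mul, abs_of_pos (hy.trans_le hw.1), mul_comm]
      _ ≤ M := hbnd w hw
  simpa [Real.norm_eq_abs, abs_of_nonneg (sub_nonneg.2 hyx)] using
    (convex_Icc y x).norm_image_sub_le_of_norm_hasDerivWithin_le hf hderiv
      (left_mem_Icc.2 hyx) (right_mem_Icc.2 hyx)

theorem abs_le_of_hasDerivWithinAt_Iio_of_abs_sub_le {g B : ℝ → ℝ} {x d b : ℝ}
    (hg : HasDerivWithinAt g d (Iio x) x) (hB : Tendsto B (𝓝[<] x) (𝓝 b))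
    (hle : ∀ᶠ y in 𝓝[<] x, |g x - g y| ≤ B y * (x - y)) : |d| ≤ b := by
  have hslope : Tendsto (slope g x) (𝓝[<] x) (𝓝 d) :=
    (hasDerivWithinAt_iff_tendsto_slope' (s := Iio x) (lt_irrefl x)).1 hg
  refine le_of_tendsto_of_tendsto hslope.abs hB ?_
  filter_upwards [hle, self_mem_nhdsWithin] with y hy hyx
  have hpos : 0 < x - y := sub_pos.2 hyx
  rw [slope_def_field, abs_div, abs_sub_comm, abs_sub_comm y, abs_of_pos hpos,
    div_le_iff₀ hpos]
  exact hy

theorem scaled_deriv_bound_of_pointwise_limit_general (L : ℝ)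
    (f : ℕ → ℝ → ℝ) (f' : ℕ → ℝ → ℝ) (g g' : ℝ → ℝ) (M : ℝ)
    (hf : ∀ n, ∀ x ∈ Set.Ioc 0 L, HasDerivWithinAt (f n) (f' n x) (Set.Ioc 0 L) x)
    (hg : ∀ x ∈ Set.Ioc 0 L, HasDerivWithinAt g (g' x) (Set.Ioc 0 L) x)
    (hconv : ∀ x ∈ Set.Ioc 0 L, Filter.Tendsto (fun n => f n x) Filter.atTop (nhds (g x)))
    (hbnd : ∀ n, ∀ x ∈ Set.Ioc 0 L, |x * f' n x| ≤ M) :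
    ∀ x ∈ Set.Ioc 0 L, |x * g' x| ≤ M := by
  intro x hx
  have hsub : ∀ y ∈ Ioo 0 x, Icc y x ⊆ Ioc 0 L := fun y hy w hw =>
    ⟨hy.1.trans_le hw.1, hw.2.trans hx.2⟩
  have hlimit : ∀ y ∈ Ioo 0 x, |g x - g y| ≤ M / y * (x - y) := by
    intro y hy
    have hfn : ∀ n, |f n x - f n y| ≤ M / y * (x - y) := fun n =>
      abs_sub_le_of_abs_mul_deriv_le hy.1 hy.2.le
        (fun w hw => (hf n w (hsub y hy hw)).mono (hsub y hy))
        (fun w hw => hbnd n w (hsub y hy hw))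
    have hy' : y ∈ Ioc 0 L := hsub y hy (left_mem_Icc.2 hy.2.le)
    exact le_of_tendsto' ((hconv x hx).sub (hconv y hy')).abs hfn
  have hderiv : HasDerivWithinAt g (g' x) (Iio x) x :=
    ((hg x hx).mono fun w hw => ⟨hw.1, hw.2.le.trans hx.2⟩).mono_of_mem_nhdsWithin
      (Ioo_mem_nhdsLT hx.1)
  have hratio : Tendsto (fun y => M / y) (𝓝[<] x) (𝓝 (M / x)) :=
    ((continuousAt_const.div continuousAt_id hx.1.ne').tendsto).mono_left nhdsWithin_le_nhds
  have hbound : |g' x| ≤ M / x :=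
    abs_le_of_hasDerivWithinAt_Iio_of_abs_sub_le hderiv hratio
      (mem_of_superset (Ioo_mem_nhdsLT hx.1) hlimit)
  rw [abs_mul, abs_of_pos hx.1]
  calc x * |g' x| ≤ x * (M / x) := mul_le_mul_of_nonneg_left hbound hx.1.le
    _ = M := mul_div_cancel₀ M hx.1.ne'

theorem scaled_deriv_bound_of_pointwise_limit (L : ℝ) (hL : 0 < L)
    (f : ℕ → ℝ → ℝ) (f' : ℕ → ℝ → ℝ) (g g' : ℝ → ℝ) (M : ℝ) (hM : 0 ≤ M)
    (hf : ∀ n, ∀ x ∈ Set.Ioc 0 L, HasDerivWithinAt (f n) (f' n x) (Set.Ioc 0 L) x)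
    (hf'c : ∀ n, ContinuousOn (f' n) (Set.Ioc 0 L))
    (hg : ∀ x ∈ Set.Ioc 0 L, HasDerivWithinAt g (g' x) (Set.Ioc 0 L) x)
    (hg'c : ContinuousOn g' (Set.Ioc 0 L))
    (hconv : ∀ x ∈ Set.Ioc 0 L, Filter.Tendsto (fun n => f n x) Filter.atTop (nhds (g x)))
    (hbnd : ∀ n, ∀ x ∈ Set.Ioc 0 L, |x * f' n x| ≤ M) :
    ∀ x ∈ Set.Ioc 0 L, |x * g' x| ≤ M :=
  scaled_deriv_bound_of_pointwise_limit_general L f f' g g' M hf hg hconv hbnd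
end

section
/- Let f be a continuously differentiable probability density on (0,2) satisfying the delay differential equation 4(1+C)·x·f'(x) = x·f'(x/2) − 4·f(1 + x/2) for all x ∈ (0,2), where C = ∫_1^2 f, and suppose f > 0 on (0,2). If there exist M ∈ ℝ and ε > 0 with f'(x) ≤ M for all x ∈ (0,ε), then f'(x) < 0 for all x ∈ (0,2), i.e. f is strictly decreasing. -/
theorem fixed_point_decreasing (f f' : ℝ → ℝ) (C : ℝ)
    (hderiv : ∀ x ∈ Set.Ioo (0:ℝ) 2, HasDerivAt f (f' x) x)
    (hf'c : ContinuousOn f' (Set.Ioo 0 2))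
    (hpos : ∀ x ∈ Set.Ioo (0:ℝ) 2, 0 < f x)
    (hprob : ∫ x in (0:ℝ)..2, f x = 1)
    (hC : C = ∫ y in (1:ℝ)..2, f y)
    (heq : ∀ x ∈ Set.Ioo (0:ℝ) 2,
      4 * (1 + C) * x * f' x = x * f' (x/2) - 4 * f (1 + x/2))
    (hM : ∃ M : ℝ, ∃ ε > (0:ℝ), ∀ x ∈ Set.Ioo (0:ℝ) ε, f' x ≤ M) :
    ∀ x ∈ Set.Ioo (0:ℝ) 2, f' x < 0 := by
  -- C ≥ 0
  have hC0 : 0 ≤ C := by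
    rw [hC]
    apply intervalIntegral.integral_nonneg_of_ae_restrict (by norm_num)
    have h2 : ∀ᵐ x : ℝ, x ≠ (2:ℝ) := by
      rw [MeasureTheory.ae_iff]
      have : {x : ℝ | ¬ x ≠ 2} = {2} := by ext x; simp
      rw [this]
      exact Real.volume_singleton
    filter_upwards [MeasureTheory.ae_restrict_mem measurableSet_Icc,
      MeasureTheory.ae_restrict_of_ae h2] with x hx hx2
    have hxm : x ∈ Set.Ioo (0:ℝ) 2 := ⟨by linarith [hx.1], lt_of_le_of_ne hx.2 hx2⟩
    exact (hpos x hxm).le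
  by_contra hcon
  push_neg at hcon
  obtain ⟨ξ, hξ, hfξ⟩ := hcon
  -- key step
  have key : ∀ x ∈ Set.Ioo (0:ℝ) 2, 0 ≤ f' x → 4 * f' x < f' (x/2) := by
    intro x hx hfx
    have hx0 : 0 < x := hx.1
    have hmem : (1 + x/2) ∈ Set.Ioo (0:ℝ) 2 := ⟨by linarith, by linarith [hx.2]⟩
    have hfpos := hpos _ hmem
    have he := heq x hx
    have h1 : 0 < x * (f' (x/2) - 4 * f' x) := by
      nlinarith [mul_nonneg (mul_nonneg hC0 hx0.le) hfx]
    nlinarith [h1, hx0]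
  have hξmem : ∀ n : ℕ, ξ / 2 / 2 ^ n ∈ Set.Ioo (0:ℝ) 2 := by
    intro n
    constructor
    · exact div_pos (div_pos hξ.1 two_pos) (by positivity)
    · have h1 : (1:ℝ) ≤ 2 ^ n := one_le_pow₀ one_le_two
      have : ξ / 2 / 2 ^ n ≤ ξ / 2 := by
        apply div_le_self (by linarith [hξ.1]) h1
      linarith [hξ.2]
  have hd : 0 < f' (ξ / 2) := by
    have := key ξ hξ hfξ
    linarith
  -- induction
  have hind : ∀ n : ℕ, 4 ^ n * f' (ξ / 2) ≤ f' (ξ / 2 / 2 ^ n) := by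
    intro n
    induction n with
    | zero => simp
    | succ n ih =>
      have hxm := hξmem n
      have hfx : 0 ≤ f' (ξ / 2 / 2 ^ n) := by
        have : (0:ℝ) < 4 ^ n * f' (ξ / 2) := by positivity
        linarith
      have hk := key _ hxm hfx
      have heq2 : ξ / 2 / 2 ^ n / 2 = ξ / 2 / 2 ^ (n+1) := by
        rw [pow_succ]; ring
      rw [heq2] at hk
      have : (4:ℝ) ^ (n+1) * f' (ξ / 2) = 4 * (4 ^ n * f' (ξ / 2)) := by ring
      nlinarith
  obtain ⟨M, ε, hε, hMb⟩ := hM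
  obtain ⟨n₁, hn₁⟩ := pow_unbounded_of_one_lt (ξ / 2 / ε) (one_lt_two (α := ℝ))
  obtain ⟨n₂, hn₂⟩ := pow_unbounded_of_one_lt (M / f' (ξ / 2)) (by norm_num : (1:ℝ) < 4)
  set n := n₁ + n₂ with hn
  have h2n : (2:ℝ) ^ n₁ ≤ 2 ^ n := pow_le_pow_right₀ one_le_two (Nat.le_add_right _ _)
  have h4n : (4:ℝ) ^ n₂ ≤ 4 ^ n := pow_le_pow_right₀ (by norm_num) (Nat.le_add_left _ _)
  have hsmall : ξ / 2 / 2 ^ n < ε := by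
    rw [div_lt_iff₀ (by positivity)]
    have : ξ / 2 / ε < 2 ^ n := lt_of_lt_of_le hn₁ h2n
    rw [div_lt_iff₀ hε] at this
    linarith
  have hbig : M < 4 ^ n * f' (ξ / 2) := by
    have : M / f' (ξ / 2) < 4 ^ n := lt_of_lt_of_le hn₂ h4n
    rw [div_lt_iff₀ hd] at this
    linarith
  have hle := hMb (ξ / 2 / 2 ^ n) ⟨(hξmem n).1, hsmall⟩
  linarith [hind n]
end

section
/- Let f be a twice continuously differentiable positive function on (0,2) with f' < 0, satisfying 4(1+C)·x·f'(x) = x·f'(x/2) − 4·f(1+x/2) for all x ∈ (0,2), where C ≥ 0 is a constant. If f'' is bounded below on (0,2), then f''(x) ≥ 0 for all x ∈ (0,2), i.e. f is convex. -/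
theorem fixed_point_convex (f f' f'' : ℝ → ℝ) (C : ℝ) (hC : 0 ≤ C)
    (hderiv : ∀ x ∈ Set.Ioo (0:ℝ) 2, HasDerivAt f (f' x) x)
    (hderiv2 : ∀ x ∈ Set.Ioo (0:ℝ) 2, HasDerivAt f' (f'' x) x)
    (hf''c : ContinuousOn f'' (Set.Ioo 0 2))
    (hpos : ∀ x ∈ Set.Ioo (0:ℝ) 2, 0 < f x)
    (hdec : ∀ x ∈ Set.Ioo (0:ℝ) 2, f' x < 0)
    (heq : ∀ x ∈ Set.Ioo (0:ℝ) 2,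
      4 * (1 + C) * x * f' x = x * f' (x/2) - 4 * f (1 + x/2))
    (hbelow : ∃ N : ℝ, ∀ x ∈ Set.Ioo (0:ℝ) 2, N ≤ f'' x) :
    ∀ x ∈ Set.Ioo (0:ℝ) 2, 0 ≤ f'' x := by
  -- Key inequality : f''(x/2) < 8(1+C) f''(x) for x ∈ (0,2)
  have key : ∀ x ∈ Set.Ioo (0:ℝ) 2, f'' (x/2) < 8 * (1 + C) * f'' x := by
    intro x hx
    obtain ⟨hx0, hx2⟩ := hx
    have hxmem : x ∈ Set.Ioo (0:ℝ) 2 := ⟨hx0, hx2⟩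
    have hhalf : x / 2 ∈ Set.Ioo (0:ℝ) 2 := ⟨by linarith, by linarith⟩
    have hshift : 1 + x / 2 ∈ Set.Ioo (0:ℝ) 2 := ⟨by linarith, by linarith⟩
    -- LHS derivative
    have hL : HasDerivAt (fun y => 4 * (1 + C) * y * f' y)
        (4 * (1 + C) * (1 * f' x + x * f'' x)) x := by
      have := ((hasDerivAt_id x).mul (hderiv2 x hxmem)).const_mul (4 * (1 + C))
      simpa [mul_assoc] using this
    -- RHS derivative
    have hg : HasDerivAt (fun y : ℝ => y / 2) (1/2) x := by
      simpa using (hasDerivAt_id x).div_const 2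
    have hg2 : HasDerivAt (fun y : ℝ => 1 + y / 2) (1/2) x := by
      simpa using hg.const_add 1
    have hf'h : HasDerivAt (fun y => f' (y/2)) (f'' (x/2) * (1/2)) x :=
      HasDerivAt.comp x (hderiv2 _ hhalf) hg
    have hfsh : HasDerivAt (fun y => f (1 + y/2)) (f' (1 + x/2) * (1/2)) x :=
      HasDerivAt.comp x (hderiv _ hshift) hg2
    have hR : HasDerivAt (fun y => y * f' (y/2) - 4 * f (1 + y/2))
        (1 * f' (x/2) + x * (f'' (x/2) * (1/2)) - 4 * (f' (1 + x/2) * (1/2))) x :=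
      ((hasDerivAt_id x).mul hf'h).sub (hfsh.const_mul 4)
    -- The two functions agree near x, so derivatives agree
    have hev : (fun y => 4 * (1 + C) * y * f' y)
        =ᶠ[nhds x] (fun y => y * f' (y/2) - 4 * f (1 + y/2)) := by
      filter_upwards [isOpen_Ioo.mem_nhds hxmem] with y hy using heq y hy
    have hL' : HasDerivAt (fun y => y * f' (y/2) - 4 * f (1 + y/2))
        (4 * (1 + C) * (1 * f' x + x * f'' x)) x := hL.congr_of_eventuallyEq hev.symm
    have hder_eq := hL'.unique hR
    have he2 := heq x hxmem
    have hfp := hpos _ hshift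
    have hfn := hdec _ hshift
    -- combine : 4(1+C) x f''(x) = 4 f(1+x/2)/x + (x/2) f''(x/2) - 2 f'(1+x/2)
    have h1 : 4 * (1 + C) * (x * f'' x) * x
        = 4 * f (1 + x/2) + (x/2) * f'' (x/2) * x - 2 * f' (1 + x/2) * x := by
      nlinarith [hder_eq, he2]
    nlinarith [mul_pos hx0 hx0, sq_nonneg x, mul_pos hx0 hfp,
      mul_pos hx0 (neg_pos.mpr hfn)]
  by_contra hcon
  push_neg at hcon
  obtain ⟨ξ, hξmem, hξneg⟩ := hcon
  obtain ⟨hξ0, hξ2⟩ := hξmem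
  have hK : (1:ℝ) < 8 * (1 + C) := by linarith
  have hKpos : (0:ℝ) < 8 * (1 + C) := by linarith
  have hmem : ∀ n : ℕ, ξ / 2 ^ n ∈ Set.Ioo (0:ℝ) 2 := by
    intro n
    have h2n : (1:ℝ) ≤ 2 ^ n := one_le_pow₀ (by norm_num)
    constructor
    · positivity
    · calc ξ / 2 ^ n ≤ ξ / 1 := by
            apply div_le_div_of_nonneg_left (le_of_lt hξ0) one_pos h2n
        _ < 2 := by linarith
  have hiter : ∀ n : ℕ, f'' (ξ / 2 ^ n) ≤ (8 * (1 + C)) ^ n * f'' ξ := by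
    intro n
    induction n with
    | zero => simp
    | succ n ih =>
      have hrw : ξ / 2 ^ (n+1) = (ξ / 2 ^ n) / 2 := by
        rw [div_div, ← pow_succ]
      have := key _ (hmem n)
      refine le_of_lt ?_
      calc f'' (ξ / 2 ^ (n+1)) = f'' ((ξ / 2 ^ n) / 2) := by rw [hrw]
        _ < 8 * (1 + C) * f'' (ξ / 2 ^ n) := this
        _ ≤ 8 * (1 + C) * ((8 * (1 + C)) ^ n * f'' ξ) := by
            exact mul_le_mul_of_nonneg_left ih (le_of_lt hKpos)
        _ = (8 * (1 + C)) ^ (n+1) * f'' ξ := by ring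
  obtain ⟨N, hN⟩ := hbelow
  obtain ⟨n, hn⟩ := pow_unbounded_of_one_lt (N / f'' ξ) hK
  have h1 : N ≤ (8 * (1 + C)) ^ n * f'' ξ := le_trans (hN _ (hmem n)) (hiter n)
  have h2 : (8 * (1 + C)) ^ n * f'' ξ < (N / f'' ξ) * f'' ξ :=
    mul_lt_mul_of_neg_right hn hξneg
  rw [div_mul_cancel₀ _ (ne_of_lt hξneg)] at h2
  linarith
end

section
/- Let F : [0,2] → [0,1] be a cumulative distribution function with F(0)=0, F(2)=1, satisfying (1+C)·F(x) = F(x/2) + x + 2(C−1) + x·∫_{(x+2)/2}^2 F(y)/(y−1)² dy for all x ∈ (0,2), where C = 1 − F(1). Then ∫_0^2 F(x) dx = 2(1−2C)/(1−C), provided C < 1. -/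
/-!
Integrating the functional equation over `(0, 2)`: the term `F (x / 2)` contributes
`2 ∫₀¹ F`, and after exchanging the order of integration the double integral contributes
`2 ∫₁² F`, because `∫₀^{2(y-1)} x / (y - 1)² dx = 2`. Hence `(1 + C) I = 2 I + 4 C - 2` for
`I = ∫₀² F`, which is solvable for `I` as soon as `C ≠ 1`.
-/

open MeasureTheory Set

/-- `∫₀² x ∫_{(x+2)/2}^2 G y / (y - 1)² dy dx` is the integral of `triangleKernel (x, y) * G y`
over `(0, 2] × (1, 2]`. -/
noncomputable def triangleKernel (p : ℝ × ℝ) : ℝ :=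
  if p.1 < 2 * (p.2 - 1) then p.1 / (p.2 - 1) ^ 2 else 0

lemma measurable_triangleKernel : Measurable triangleKernel :=
  Measurable.ite (measurableSet_lt measurable_fst (by fun_prop)) (by fun_prop) measurable_const

lemma triangleKernel_nonneg {x : ℝ} (hx : 0 ≤ x) (y : ℝ) : 0 ≤ triangleKernel (x, y) := by
  unfold triangleKernel
  split_ifs <;> positivity

lemma setIntegral_triangleKernel_fst {y : ℝ} (hy : y ∈ Ioc 1 2) :
    ∫ x in Ioc 0 2, triangleKernel (x, y) = 2 := by
  have hy1 : y - 1 ≠ 0 := by linarith [hy.1]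
  have hfun : (fun x => triangleKernel (x, y))
      = (Iio (2 * (y - 1))).indicator (· / (y - 1) ^ 2) := by
    ext x
    simp only [triangleKernel, indicator_apply, mem_Iio]
  have hset : Ioc 0 2 ∩ Iio (2 * (y - 1)) = Ioo 0 (2 * (y - 1)) := by
    ext x
    simp only [mem_inter_iff, mem_Ioc, mem_Iio, mem_Ioo]
    constructor
    · rintro ⟨⟨h0, -⟩, h⟩
      exact ⟨h0, h⟩
    · rintro ⟨h0, h⟩
      exact ⟨⟨h0, by linarith [hy.2]⟩, h⟩
  rw [hfun, setIntegral_indicator measurableSet_Iio, hset, ← integral_Ioc_eq_integral_Ioo,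
    ← intervalIntegral.integral_of_le (by linarith [hy.1]), intervalIntegral.integral_div,
    integral_id]
  field_simp
  ring

lemma setIntegral_triangleKernel_mul_snd (G : ℝ → ℝ) {x : ℝ} (hx : x ∈ Ioc 0 2) :
    ∫ y in Ioc 1 2, triangleKernel (x, y) * G y
      = x * ∫ y in (x + 2) / 2..2, G y / (y - 1) ^ 2 := by
  have hfun : (fun y => triangleKernel (x, y) * G y)
      = (Ioi ((x + 2) / 2)).indicator (fun y => x * (G y / (y - 1) ^ 2)) := by
    ext y
    have hcond : x < 2 * (y - 1) ↔ (x + 2) / 2 < y := by constructor <;> intro h <;> linarith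
    simp only [triangleKernel, indicator_apply, mem_Ioi, hcond]
    split_ifs <;> ring
  have hset : Ioc 1 2 ∩ Ioi ((x + 2) / 2) = Ioc ((x + 2) / 2) 2 := by
    ext y
    simp only [mem_inter_iff, mem_Ioc, mem_Ioi]
    constructor
    · rintro ⟨⟨-, h2⟩, h⟩
      exact ⟨h, h2⟩
    · rintro ⟨h, h2⟩
      exact ⟨⟨by linarith [hx.1], h2⟩, h⟩
  rw [hfun, setIntegral_indicator measurableSet_Ioi, hset,
    ← intervalIntegral.integral_of_le (by linarith [hx.2]), intervalIntegral.integral_const_mul]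

lemma integrable_triangleKernel_mul {G : ℝ → ℝ} (hG : IntegrableOn G (Ioc 1 2)) :
    Integrable (fun p : ℝ × ℝ => triangleKernel p * G p.2)
      ((volume.restrict (Ioc 0 2)).prod (volume.restrict (Ioc 1 2))) := by
  have hmeas : AEStronglyMeasurable (fun p : ℝ × ℝ => triangleKernel p * G p.2)
      ((volume.restrict (Ioc 0 2)).prod (volume.restrict (Ioc 1 2))) :=
    measurable_triangleKernel.aestronglyMeasurable.mul
      (hG.aestronglyMeasurable.comp_quasiMeasurePreserving Measure.quasiMeasurePreserving_snd)
  have hae : ∀ᵐ y ∂volume.restrict (Ioc (1:ℝ) 2), y ∈ Ioc 1 2 :=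
    ae_restrict_mem measurableSet_Ioc
  refine (integrable_prod_iff' hmeas).2 ⟨?_, ?_⟩
  · filter_upwards [hae] with y hy
    refine .mul_const (.of_integral_ne_zero (f := fun x => triangleKernel (x, y)) ?_) _
    rw [setIntegral_triangleKernel_fst hy]
    norm_num
  · refine (hG.norm.const_mul 2).congr ?_
    filter_upwards [hae] with y hy
    calc 2 * ‖G y‖ = ∫ x in Ioc 0 2, triangleKernel (x, y) * ‖G y‖ := by
          rw [integral_mul_const, setIntegral_triangleKernel_fst hy]
      _ = ∫ x in Ioc 0 2, ‖triangleKernel (x, y) * G y‖ :=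
          setIntegral_congr_fun measurableSet_Ioc fun x hx => by
            rw [norm_mul, Real.norm_of_nonneg (triangleKernel_nonneg hx.1.le y)]

section

variable {G : ℝ → ℝ}

lemma eqOn_setIntegral_triangleKernel_mul_snd :
    EqOn (fun x => ∫ y in Ioc 1 2, triangleKernel (x, y) * G y)
      (fun x => x * ∫ y in (x + 2) / 2..2, G y / (y - 1) ^ 2) (Ioc 0 2) :=
  fun _ hx => setIntegral_triangleKernel_mul_snd G hx

lemma intervalIntegrable_mul_integral_div_sq (hG : IntegrableOn G (Ioc 1 2)) :
    IntervalIntegrable (fun x => x * ∫ y in (x + 2) / 2..2, G y / (y - 1) ^ 2) volume 0 2 := by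
  have hint : IntegrableOn (fun x => ∫ y in Ioc 1 2, triangleKernel (x, y) * G y) (Ioc 0 2) :=
    (integrable_triangleKernel_mul hG).integral_prod_left
  rw [intervalIntegrable_iff_integrableOn_Ioc_of_le zero_le_two]
  exact hint.congr_fun eqOn_setIntegral_triangleKernel_mul_snd measurableSet_Ioc

lemma integral_mul_integral_div_sq (hG : IntegrableOn G (Ioc 1 2)) :
    ∫ x in (0:ℝ)..2, x * ∫ y in (x + 2) / 2..2, G y / (y - 1) ^ 2
      = 2 * ∫ y in (1:ℝ)..2, G y := by
  rw [intervalIntegral.integral_of_le zero_le_two, intervalIntegral.integral_of_le one_le_two,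
    ← setIntegral_congr_fun measurableSet_Ioc eqOn_setIntegral_triangleKernel_mul_snd,
    integral_integral_swap (integrable_triangleKernel_mul hG), ← integral_const_mul]
  refine setIntegral_congr_fun measurableSet_Ioc fun y hy => ?_
  rw [integral_mul_const, setIntegral_triangleKernel_fst hy]

end

theorem cdf_integral_value_general (F : ℝ → ℝ) (C : ℝ)
    (hmono : MonotoneOn F (Set.Icc 0 2))
    (hC1 : C < 1)
    (heq : ∀ x ∈ Set.Ioo (0:ℝ) 2,
      (1 + C) * F x = F (x/2) + x + 2 * (C - 1)
        + x * ∫ y in ((x + 2)/2)..2, F y / (y - 1) ^ 2) :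
    ∫ x in (0:ℝ)..2, F x = 2 * (1 - 2 * C) / (1 - C) := by
  have hF : ∀ {a b}, a ∈ Icc (0:ℝ) 2 → b ∈ Icc (0:ℝ) 2 → IntervalIntegrable F volume a b :=
    fun ha hb => (hmono.mono (uIcc_subset_Icc ha hb)).intervalIntegrable
  have hhalf_mem : ∀ x ∈ uIcc (0:ℝ) 2, x / 2 ∈ Icc (0:ℝ) 2 := fun x hx => by
    rw [uIcc_of_le zero_le_two] at hx
    constructor <;> linarith [hx.1, hx.2]
  have hFhalf : IntervalIntegrable (fun x => F (x / 2)) volume 0 2 :=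
    MonotoneOn.intervalIntegrable fun a ha b hb hab =>
      hmono (hhalf_mem a ha) (hhalf_mem b hb) (by linarith)
  have hF12 : IntegrableOn F (Ioc 1 2) :=
    (intervalIntegrable_iff_integrableOn_Ioc_of_le one_le_two).1 (hF (by norm_num) (by norm_num))
  have hhalf : ∫ x in (0:ℝ)..2, F (x / 2) = 2 * ∫ x in (0:ℝ)..1, F x := by
    rw [intervalIntegral.integral_comp_div F two_ne_zero]
    norm_num
  have hsplit : (∫ x in (0:ℝ)..1, F x) + ∫ x in (1:ℝ)..2, F x = ∫ x in (0:ℝ)..2, F x :=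
    intervalIntegral.integral_add_adjacent_intervals (hF (by norm_num) (by norm_num))
      (hF (by norm_num) (by norm_num))
  have hintegrated : (1 + C) * ∫ x in (0:ℝ)..2, F x
      = ∫ x in (0:ℝ)..2, (F (x/2) + x + 2 * (C - 1)
        + x * ∫ y in ((x + 2)/2)..2, F y / (y - 1) ^ 2) := by
    rw [← intervalIntegral.integral_const_mul]
    exact intervalIntegral.integral_congr_Ioo_of_le zero_le_two heq
  have hid := intervalIntegral.intervalIntegrable_id (a := (0:ℝ)) (b := 2) (μ := volume)
  rw [intervalIntegral.integral_add ((hFhalf.add hid).add intervalIntegrable_const)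
      (intervalIntegrable_mul_integral_div_sq hF12),
    intervalIntegral.integral_add (hFhalf.add hid) intervalIntegrable_const,
    intervalIntegral.integral_add hFhalf hid, hhalf, integral_mul_integral_div_sq hF12,
    integral_id, intervalIntegral.integral_const, smul_eq_mul] at hintegrated
  rw [eq_div_iff (by linarith)]
  linear_combination (-1) * hintegrated - 2 * hsplit

theorem cdf_integral_value (F : ℝ → ℝ) (C : ℝ)
    (hmono : MonotoneOn F (Set.Icc 0 2))
    (hrange : ∀ x ∈ Set.Icc (0:ℝ) 2, F x ∈ Set.Icc (0:ℝ) 1)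
    (hF0 : F 0 = 0) (hF2 : F 2 = 1)
    (hC : C = 1 - F 1) (hC1 : C < 1)
    (heq : ∀ x ∈ Set.Ioo (0:ℝ) 2,
      (1 + C) * F x = F (x/2) + x + 2 * (C - 1)
        + x * ∫ y in ((x + 2)/2)..2, F y / (y - 1) ^ 2) :
    ∫ x in (0:ℝ)..2, F x = 2 * (1 - 2 * C) / (1 - C) :=
  cdf_integral_value_general F C hmono hC1 heq
end

section
/- With W̃, Ṽ as above and additionally A·v = λ·v and ŵ·A = λ·ŵ for a matrix A and scalar λ, the conjugated matrix B = W̃·A·Ṽ satisfies: B_{jj} = λ, B_{ij} = 0 and B_{ji} = 0 for all i ≠ j, and B_{ik} = A_{ik} − v_i·A_{jk} for all i ≠ j and k ≠ j. -/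
theorem similarity_transform_entries (m : ℕ) (j : Fin (m + 1))
    (v w : Fin (m + 1) → ℝ) (A : Matrix (Fin (m + 1)) (Fin (m + 1)) ℝ) (lam : ℝ)
    (hvj : v j = 1) (hwv : ∑ i, w i * v i = 1)
    (hAv : A.mulVec v = lam • v) (hwA : Matrix.vecMul w A = lam • w) :
    let Wt : Matrix (Fin (m + 1)) (Fin (m + 1)) ℝ :=
      Matrix.of fun i k =>
        (if i = j then w k else 0) - v i * (if k = j then 1 else 0)
          + (if i = k then 1 else 0)
    let Vt : Matrix (Fin (m + 1)) (Fin (m + 1)) ℝ :=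
      Matrix.of fun i k =>
        v i * ((if k = j then 1 else 0) - (if k = j then 0 else w k))
          + (if i = k ∧ i ≠ j then 1 else 0)
    let B := Wt * A * Vt
    B j j = lam ∧
      (∀ i, i ≠ j → B i j = 0 ∧ B j i = 0) ∧
      (∀ i k, i ≠ j → k ≠ j → B i k = A i k - v i * A j k) := by
  intro Wt Vt B
  have hwAb : ∀ b, ∑ a, w a * A a b = lam * w b := by
    intro b
    have := congrFun hwA b
    simpa [Matrix.vecMul, dotProduct] using this
  have hAvi : ∀ i, ∑ b, A i b * v b = lam * v i := by
    intro i
    have := congrFun hAv i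
    simpa [Matrix.mulVec, dotProduct] using this
  have hWA : ∀ i b, (Wt * A) i b = (if i = j then lam * w b else 0) - v i * A j b + A i b := by
    intro i b
    simp only [Matrix.mul_apply, Wt, Matrix.of_apply, sub_mul, add_mul, ite_mul, one_mul,
      zero_mul, Finset.sum_add_distrib, Finset.sum_sub_distrib, mul_assoc]
    by_cases hij : i = j <;>
      simp [hij, hwAb b, mul_assoc, Finset.sum_ite_eq', Finset.sum_ite_eq]
  have hsum : ∀ i, ∑ b, (Wt * A) i b * v b = if i = j then lam else 0 := by
    intro i
    simp only [hWA, sub_mul, add_mul, ite_mul, zero_mul, Finset.sum_add_distrib,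
      Finset.sum_sub_distrib]
    by_cases hij : i = j <;>
      simp [hij, hAvi, hvj, mul_assoc, ← Finset.mul_sum, hwv] <;> ring
  have hB : ∀ i k, B i k =
      (if i = j then lam else 0) * ((if k = j then 1 else 0) - (if k = j then 0 else w k))
        + (if k ≠ j then (Wt * A) i k else 0) := by
    intro i k
    show ∑ b, (Wt * A) i b * Vt b k = _
    have : ∀ b, (Wt * A) i b * Vt b k =
        ((Wt * A) i b * v b) * ((if k = j then 1 else 0) - (if k = j then 0 else w k))
          + (if b = k ∧ b ≠ j then (Wt * A) i b else 0) := by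
      intro b
      simp only [Vt, Matrix.of_apply, mul_add]
      ring_nf
      by_cases hbk : b = k <;> by_cases hbj : b = j <;> simp [hbk, hbj] <;> ring
    rw [Finset.sum_congr rfl fun b _ => this b, Finset.sum_add_distrib, ← Finset.sum_mul, hsum]
    congr 1
    by_cases hkj : k = j
    · simp [hkj]
    · have h2 : ∀ b, (if b = k ∧ b ≠ j then (Wt * A) i b else 0)
          = (if b = k then (Wt * A) i b else 0) := by
        intro b; by_cases hbk : b = k <;> simp [hbk, hkj]
      simp only [h2]
      simp [Finset.sum_ite_eq', hkj]
  refine ⟨?_, ?_, ?_⟩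
  · simp [hB]
  · intro i hij
    constructor
    · simp [hB, hij]
    · simp [hB, hij, Ne.symm hij, hWA, hvj]
  · intro i k hij hkj
    simp [hB, hij, hkj, hWA]
    ring
end
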